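/- arXiv:gr-qc/0101020 — 11 statements merged into one kernel-verified Lean document; each statement's English description precedes it below -/
import Mathlib

section
/- Let n ≥ 2, let M be an invertible symmetric n×n real matrix, let b, c ∈ ℝⁿ be column vectors and let a₁, a₂, a₃ ∈ ℝ with a₁ ≠ 0. Writing b² = bᵀM⁻¹b, c² = cᵀM⁻¹c and b·c = bᵀM⁻¹c, one has det(a₁ M + a₂ b bᵀ + a₃ c cᵀ) = a₁^{n-2} · det(M) · [ (a₁ + a₂ b²)(a₁ + a₃ c²) − a₂ a₃ (b·c)² ]. -/
/-!
Write the perturbation as `U * V` with `U = [a₂ b | a₃ c]` (an `n × 2` matrix) and `V = [b; c]`.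
Then `a₁ M + U V = M (a₁ I + M⁻¹ U V)`, and Sylvester's identity
`det (t I_n + P Q) = t ^ (n - 2) det (t I_2 + Q P)` reduces the determinant to that of a `2 × 2`
matrix whose entries are the `M⁻¹`-inner products of `b` and `c`; the symmetry of `M⁻¹` identifies
`cᵀM⁻¹b` with `bᵀM⁻¹c`.
-/

open Matrix Polynomial

namespace Matrix

theorem det_smul_one_add_mul_of_le {m n R : Type*} [Fintype m] [Fintype n] [DecidableEq m]
    [DecidableEq n] [CommRing R] (A : Matrix m n R) (B : Matrix n m R)
    (hle : Fintype.card n ≤ Fintype.card m) (t : R) :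
    det (t • 1 + A * B) = t ^ (Fintype.card m - Fintype.card n) * det (t • 1 + B * A) := by
  have key := congrArg (eval t) (charpoly_mul_comm_of_le (-A) B hle)
  rw [eval_mul, eval_pow, eval_X, eval_charpoly, eval_charpoly] at key
  simpa [sub_eq_add_neg, smul_one_eq_diagonal, scalar_apply] using key

theorem sum_vecMulVec_eq_transpose_mul {k m n R : Type*} [Fintype k]
    [NonUnitalNonAssocSemiring R] (u : k → m → R) (v : k → n → R) :
    ∑ j, vecMulVec (u j) (v j) = (of u)ᵀ * of v := by
  ext i l
  simp [mul_apply, vecMulVec_apply, Matrix.sum_apply]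

theorem of_mul_mul_transpose_of_apply {k m n R : Type*} [Fintype m] [Fintype n]
    [CommSemiring R] (A : Matrix m n R) (u : k → n → R) (v : k → m → R) (i j : k) :
    (of v * (A * (of u)ᵀ)) i j = v i ⬝ᵥ A *ᵥ u j := by
  simp [mul_apply, dotProduct, mulVec, Finset.mul_sum]

theorem IsSymm.dotProduct_mulVec_comm {n R : Type*} [Fintype n] [CommSemiring R]
    {A : Matrix n n R} (hA : A.IsSymm) (u v : n → R) :
    u ⬝ᵥ A *ᵥ v = v ⬝ᵥ A *ᵥ u := by
  rw [dotProduct_mulVec, ← mulVec_transpose, hA.eq, dotProduct_comm]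

theorem smul_add_eq_mul_smul_one_add_inv_mul {n R : Type*} [Fintype n] [DecidableEq n]
    [CommRing R] {M : Matrix n n R} (hM : IsUnit M.det) (t : R) (N : Matrix n n R) :
    t • M + N = M * (t • 1 + M⁻¹ * N) := by
  rw [Matrix.mul_add, Matrix.mul_smul, Matrix.mul_one, mul_nonsing_inv_cancel_left _ _ hM]

end Matrix

theorem det_add_rank_two_perturbation_general
    (n : ℕ) (hn : 2 ≤ n) (M : Matrix (Fin n) (Fin n) ℝ)
    (hMsymm : M.IsSymm) (hMinv : IsUnit M.det)
    (b c : Fin n → ℝ) (a₁ a₂ a₃ : ℝ) :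
    (a₁ • M + a₂ • vecMulVec b b + a₃ • vecMulVec c c).det
      = a₁ ^ (n - 2) * M.det *
        ((a₁ + a₂ * (b ⬝ᵥ M⁻¹ *ᵥ b)) * (a₁ + a₃ * (c ⬝ᵥ M⁻¹ *ᵥ c))
          - a₂ * a₃ * (b ⬝ᵥ M⁻¹ *ᵥ c) ^ 2) := by
  set u : Fin 2 → Fin n → ℝ := ![a₂ • b, a₃ • c]
  set v : Fin 2 → Fin n → ℝ := ![b, c]
  have hUV : a₂ • vecMulVec b b + a₃ • vecMulVec c c = (of u)ᵀ * of v := by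
    rw [← sum_vecMulVec_eq_transpose_mul, Fin.sum_univ_two]
    simp [u, v, smul_vecMulVec]
  have hsylvester := det_smul_one_add_mul_of_le (M⁻¹ * (of u)ᵀ) (of v) (by simpa using hn) a₁
  have hcb := hMsymm.inv.dotProduct_mulVec_comm c b
  rw [add_assoc, hUV, smul_add_eq_mul_smul_one_add_inv_mul hMinv, det_mul, ← Matrix.mul_assoc,
    hsylvester, det_fin_two]
  simp only [Matrix.add_apply, Matrix.smul_apply, one_apply, of_mul_mul_transpose_of_apply,
    Fintype.card_fin, smul_eq_mul, mul_one, mul_zero, zero_add, cons_val_zero, cons_val_one,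
    cons_val_fin_one, mulVec_smul, dotProduct_smul, hcb, u, v, ↓reduceIte, zero_ne_one,
    one_ne_zero]
  ring

/-- **Determinant identity for a rank-two perturbation of an invertible symmetric matrix.**
If `M` is an invertible symmetric `n × n` real matrix (`n ≥ 2`), `b c : ℝⁿ` and
`a₁ ≠ 0`, then, writing `b² = bᵀM⁻¹b`, `c² = cᵀM⁻¹c`, `b·c = bᵀM⁻¹c`,
`det (a₁ M + a₂ b bᵀ + a₃ c cᵀ)
  = a₁ ^ (n-2) · det M · [(a₁ + a₂ b²)(a₁ + a₃ c²) − a₂ a₃ (b·c)²]`. -/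
theorem det_add_rank_two_perturbation
    (n : ℕ) (hn : 2 ≤ n) (M : Matrix (Fin n) (Fin n) ℝ)
    (hMsymm : M.IsSymm) (hMinv : IsUnit M.det)
    (b c : Fin n → ℝ) (a₁ a₂ a₃ : ℝ) (ha₁ : a₁ ≠ 0) :
    (a₁ • M + a₂ • vecMulVec b b + a₃ • vecMulVec c c).det
      = a₁ ^ (n - 2) * M.det *
        ((a₁ + a₂ * (b ⬝ᵥ M⁻¹ *ᵥ b)) * (a₁ + a₃ * (c ⬝ᵥ M⁻¹ *ᵥ c))
          - a₂ * a₃ * (b ⬝ᵥ M⁻¹ *ᵥ c) ^ 2) :=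
  det_add_rank_two_perturbation_general n hn M hMsymm hMinv b c a₁ a₂ a₃
end

section
/- Let g be a symmetric n×n real matrix, ζ ∈ ℝⁿ, and let W¹, W² ∈ ℝⁿ satisfy 1 + ζᵀW¹ > 0 and 1 + ζᵀW² > 0. Set Ω₁² = 1 + ζᵀW¹ and Ω₂² = 1 + ζᵀW². Then 1 + ζᵀ(W² + Ω₂² W¹) = Ω₁² Ω₂² > 0, and the composition law T(ζ, W², T(ζ, W¹, g)) = T(ζ, W² + Ω₂² W¹, g) holds. -/
open Matrix

/-- The transformation `T(ζ, W, g) = Ω²·g − (gζ)Wᵀ − W(gζ)ᵀ − (λ/Ω²)·W Wᵀ`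
with `Ω² = 1 + ζᵀW` and `λ = −ζᵀgζ`. -/
noncomputable def ehlersT {n : ℕ} (ζ W : Fin n → ℝ) (g : Matrix (Fin n) (Fin n) ℝ) :
    Matrix (Fin n) (Fin n) ℝ :=
  (1 + ζ ⬝ᵥ W) • g - vecMulVec (g *ᵥ ζ) W - vecMulVec W (g *ᵥ ζ)
    - ((-(ζ ⬝ᵥ g *ᵥ ζ)) / (1 + ζ ⬝ᵥ W)) • vecMulVec W W

/-!
Besides `g` itself, `T(ζ, W, g)` involves only `gζ` and `ζᵀgζ`, and these transform simply:
`T(ζ, W, g) ζ = gζ − (ζᵀgζ / Ω²) W` and `ζᵀ T(ζ, W, g) ζ = ζᵀgζ / Ω²`.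
Substituting them into `T(ζ, W², T(ζ, W¹, g))` and using `1 + ζᵀ(W² + Ω₂² W¹) = Ω₁² Ω₂²`
turns the composition law into an identity of rational functions, checked entrywise.
-/

lemma one_add_dotProduct_add_smul {R ι : Type*} [CommRing R] [Fintype ι] (ζ v w : ι → R) :
    1 + ζ ⬝ᵥ (w + (1 + ζ ⬝ᵥ w) • v) = (1 + ζ ⬝ᵥ v) * (1 + ζ ⬝ᵥ w) := by
  rw [dotProduct_add, dotProduct_smul, smul_eq_mul]
  ring

section

variable {n : ℕ} (ζ W : Fin n → ℝ) (g : Matrix (Fin n) (Fin n) ℝ)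

lemma ehlersT_apply (i j : Fin n) :
    ehlersT ζ W g i j
      = (1 + ζ ⬝ᵥ W) * g i j - (g *ᵥ ζ) i * W j - W i * (g *ᵥ ζ) j
        + (ζ ⬝ᵥ g *ᵥ ζ) / (1 + ζ ⬝ᵥ W) * (W i * W j) := by
  simp only [ehlersT, Matrix.sub_apply, Matrix.smul_apply, vecMulVec_apply, smul_eq_mul,
    neg_div, neg_mul, sub_neg_eq_add]

variable {ζ W} in
lemma ehlersT_mulVec (hΩ : 1 + ζ ⬝ᵥ W ≠ 0) :
    ehlersT ζ W g *ᵥ ζ = g *ᵥ ζ - ((ζ ⬝ᵥ g *ᵥ ζ) / (1 + ζ ⬝ᵥ W)) • W := by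
  simp only [ehlersT, sub_mulVec, smul_mulVec, vecMulVec_mulVec, op_smul_eq_smul,
    dotProduct_comm W ζ, dotProduct_comm (g *ᵥ ζ) ζ]
  ext i
  simp only [Pi.sub_apply, Pi.smul_apply, smul_eq_mul]
  field_simp
  ring

variable {ζ W} in
lemma dotProduct_ehlersT_mulVec (hΩ : 1 + ζ ⬝ᵥ W ≠ 0) :
    ζ ⬝ᵥ ehlersT ζ W g *ᵥ ζ = (ζ ⬝ᵥ g *ᵥ ζ) / (1 + ζ ⬝ᵥ W) := by
  rw [ehlersT_mulVec g hΩ, dotProduct_sub, dotProduct_smul, smul_eq_mul]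
  field_simp
  ring

end

lemma ehlersT_ehlersT {n : ℕ} (g : Matrix (Fin n) (Fin n) ℝ) {ζ W1 W2 : Fin n → ℝ}
    (hΩ1 : 1 + ζ ⬝ᵥ W1 ≠ 0) (hΩ2 : 1 + ζ ⬝ᵥ W2 ≠ 0) :
    ehlersT ζ W2 (ehlersT ζ W1 g) = ehlersT ζ (W2 + (1 + ζ ⬝ᵥ W2) • W1) g := by
  ext i j
  rw [ehlersT_apply, ehlersT_apply, ehlersT_apply, dotProduct_ehlersT_mulVec g hΩ1,
    ehlersT_mulVec g hΩ1, one_add_dotProduct_add_smul]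
  simp only [Pi.sub_apply, Pi.add_apply, Pi.smul_apply, smul_eq_mul]
  field_simp
  ring

theorem ehlersT_comp_general (n : ℕ) (g : Matrix (Fin n) (Fin n) ℝ)
    (ζ W1 W2 : Fin n → ℝ)
    (h1 : 0 < 1 + ζ ⬝ᵥ W1) (h2 : 0 < 1 + ζ ⬝ᵥ W2) :
    (1 + ζ ⬝ᵥ (W2 + (1 + ζ ⬝ᵥ W2) • W1)
        = (1 + ζ ⬝ᵥ W1) * (1 + ζ ⬝ᵥ W2)
      ∧ 0 < (1 + ζ ⬝ᵥ W1) * (1 + ζ ⬝ᵥ W2))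
    ∧ ehlersT ζ W2 (ehlersT ζ W1 g)
        = ehlersT ζ (W2 + (1 + ζ ⬝ᵥ W2) • W1) g :=
  ⟨⟨one_add_dotProduct_add_smul ζ W1 W2, mul_pos h1 h2⟩,
    ehlersT_ehlersT g h1.ne' h2.ne'⟩

/-- **Composition law.** If `1 + ζᵀW¹ > 0` and `1 + ζᵀW² > 0` then
`1 + ζᵀ(W² + Ω₂² W¹) = Ω₁² Ω₂² > 0` and
`T(ζ, W², T(ζ, W¹, g)) = T(ζ, W² + Ω₂² W¹, g)`. -/
theorem ehlersT_comp (n : ℕ) (g : Matrix (Fin n) (Fin n) ℝ) (hg : g.IsSymm)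
    (ζ W1 W2 : Fin n → ℝ)
    (h1 : 0 < 1 + ζ ⬝ᵥ W1) (h2 : 0 < 1 + ζ ⬝ᵥ W2) :
    (1 + ζ ⬝ᵥ (W2 + (1 + ζ ⬝ᵥ W2) • W1)
        = (1 + ζ ⬝ᵥ W1) * (1 + ζ ⬝ᵥ W2)
      ∧ 0 < (1 + ζ ⬝ᵥ W1) * (1 + ζ ⬝ᵥ W2))
    ∧ ehlersT ζ W2 (ehlersT ζ W1 g)
        = ehlersT ζ (W2 + (1 + ζ ⬝ᵥ W2) • W1) g :=
  ehlersT_comp_general n g ζ W1 W2 h1 h2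
end

section
/- Let g be a symmetric 4×4 real matrix, ζ ∈ ℝ⁴ and W ∈ ℝ⁴ with Ω² = 1 + ζᵀW > 0. Then det(T(ζ, W, g)) = Ω⁴ · det(g). -/
/-!
With `Ω² = 1 + ζᵀW`, the transformation factors as `T = Ω² · Q g Qᵀ` for the rank-one
perturbation of the identity `Q = 1 − Ω⁻² W ζᵀ` (this uses `gᵀ = g`). Its determinant is
`det Q = 1 − Ω⁻² ζᵀW = Ω⁻²`, so in dimension `n` one gets `det T = Ω²ⁿ · Ω⁻⁴ · det g`,
which is `Ω⁴ det g` for `n = 4`.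
-/

open Matrix

namespace Matrix

variable {m R : Type*} [Fintype m] [CommRing R]

theorem det_one_add_vecMulVec [DecidableEq m] (u v : m → R) :
    (1 + vecMulVec u v).det = 1 + v ⬝ᵥ u := by
  rw [vecMulVec_eq Unit, det_one_add_replicateCol_mul_replicateRow]

theorem IsSymm.vecMul_eq_mulVec {A : Matrix m m R} (hA : A.IsSymm) (v : m → R) :
    v ᵥ* A = A *ᵥ v := by
  rw [← vecMul_transpose, hA.eq]

end Matrix

variable {n : ℕ}

noncomputable def ehlersFactor (ζ W : Fin n → ℝ) : Matrix (Fin n) (Fin n) ℝ :=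
  1 - (1 + ζ ⬝ᵥ W)⁻¹ • vecMulVec W ζ

theorem det_ehlersFactor {ζ W : Fin n → ℝ} (hΩ : 1 + ζ ⬝ᵥ W ≠ 0) :
    (ehlersFactor ζ W).det = (1 + ζ ⬝ᵥ W)⁻¹ := by
  rw [ehlersFactor, sub_eq_add_neg, ← neg_smul, ← smul_vecMulVec, det_one_add_vecMulVec,
    dotProduct_smul, smul_eq_mul]
  field_simp
  ring

theorem ehlersT_eq_smul_factor_mul_mul_transpose {g : Matrix (Fin n) (Fin n) ℝ} (hg : g.IsSymm)
    {ζ W : Fin n → ℝ} (hΩ : 1 + ζ ⬝ᵥ W ≠ 0) :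
    ehlersT ζ W g = (1 + ζ ⬝ᵥ W) • (ehlersFactor ζ W * g * (ehlersFactor ζ W)ᵀ) := by
  have hQg : ehlersFactor ζ W * g = g - (1 + ζ ⬝ᵥ W)⁻¹ • vecMulVec W (g *ᵥ ζ) := by
    rw [ehlersFactor, Matrix.sub_mul, Matrix.one_mul, Matrix.smul_mul, vecMulVec_mul,
      hg.vecMul_eq_mulVec]
  rw [hQg, ehlersFactor, transpose_sub, transpose_one, transpose_smul, transpose_vecMulVec,
    Matrix.mul_sub, Matrix.mul_one, Matrix.mul_smul, Matrix.sub_mul, mul_vecMulVec,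
    Matrix.smul_mul, vecMulVec_mul_vecMulVec, dotProduct_comm (g *ᵥ ζ), ehlersT]
  ext i j
  simp only [Matrix.smul_apply, Matrix.sub_apply, vecMulVec_apply, Pi.smul_apply, smul_eq_mul]
  field_simp
  ring

theorem det_ehlersT {g : Matrix (Fin n) (Fin n) ℝ} (hg : g.IsSymm) {ζ W : Fin n → ℝ}
    (hΩ : 1 + ζ ⬝ᵥ W ≠ 0) (hn : 2 ≤ n) :
    (ehlersT ζ W g).det = (1 + ζ ⬝ᵥ W) ^ (n - 2) * g.det := by
  rw [ehlersT_eq_smul_factor_mul_mul_transpose hg hΩ, det_smul, det_mul, det_mul, det_transpose,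
    det_ehlersFactor hΩ, Fintype.card_fin]
  obtain ⟨k, rfl⟩ := Nat.exists_eq_add_of_le' hn
  rw [Nat.add_sub_cancel, pow_add]
  field_simp

/-- **Determinant of the transformed metric:** for a symmetric `4 × 4` real matrix `g`
and `Ω² = 1 + ζᵀW > 0`, one has `det (T(ζ, W, g)) = Ω⁴ · det g`. -/
theorem ehlersT_det (g : Matrix (Fin 4) (Fin 4) ℝ) (hg : g.IsSymm)
    (ζ W : Fin 4 → ℝ) (hΩ : 0 < 1 + ζ ⬝ᵥ W) :
    (ehlersT ζ W g).det = (1 + ζ ⬝ᵥ W) ^ 2 * g.det :=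
  det_ehlersT hg hΩ.ne' le_add_self
end

section
/- Let g be an invertible symmetric 4×4 real matrix, ζ ∈ ℝ⁴ and W ∈ ℝ⁴ with Ω² = 1 + ζᵀW > 0. Then T(ζ, W, g) is invertible and its inverse is the matrix Ω⁻²·( g⁻¹ + (Wᵀg⁻¹W)·ζζᵀ + ζ(g⁻¹W)ᵀ + (g⁻¹W)ζᵀ ); equivalently, T(ζ, W, g) multiplied by this matrix equals the identity. -/
/-!
With `s = Ω²` and `P = s·1 − W ζᵀ`, symmetry of `g` gives the factorization `s·T = P g Pᵀ`.
Since `s − 1 = ζᵀW`, one has `P (1 + W ζᵀ) = s·1` (a Sherman–Morrison-type identity), so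
`T⁻¹ = s⁻¹ (1 + ζ Wᵀ) g⁻¹ (1 + W ζᵀ)`, which expands to the stated matrix.
-/

open Matrix

section
variable {ι R : Type*} [Fintype ι] [DecidableEq ι] [CommRing R]

theorem one_add_dotProduct_smul_sub_vecMulVec_mul_one_add_vecMulVec (u v : ι → R) :
    ((1 + v ⬝ᵥ u) • 1 - vecMulVec u v) * (1 + vecMulVec u v)
      = (1 + v ⬝ᵥ u) • (1 : Matrix ι ι R) := by
  simp only [sub_mul, mul_add, mul_one, smul_mul_assoc, one_mul, vecMulVec_mul_vecMulVec,
    vecMulVec_smul]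
  module

theorem one_add_vecMulVec_mul_mul_one_add_vecMulVec {A : Matrix ι ι R} (hA : A.IsSymm)
    (u v : ι → R) :
    (1 + vecMulVec u v) * A * (1 + vecMulVec v u)
      = A + (v ⬝ᵥ A *ᵥ v) • vecMulVec u u + vecMulVec u (A *ᵥ v) + vecMulVec (A *ᵥ v) u := by
  have hvA : v ᵥ* A = A *ᵥ v := by rw [← vecMul_transpose, hA.eq]
  simp only [add_mul, mul_add, one_mul, mul_one, vecMulVec_mul, hvA, mul_vecMulVec,
    vecMulVec_mulVec, op_smul_eq_smul, smul_vecMulVec, dotProduct_comm (A *ᵥ v) v]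
  abel

end

section
variable {n : ℕ} {g : Matrix (Fin n) (Fin n) ℝ} {ζ W : Fin n → ℝ}

theorem ehlersT_eq_inv_smul_mul_mul_transpose (hg : g.IsSymm) (hΩ : 1 + ζ ⬝ᵥ W ≠ 0) :
    ehlersT ζ W g = (1 + ζ ⬝ᵥ W)⁻¹ •
      (((1 + ζ ⬝ᵥ W) • 1 - vecMulVec W ζ) * g * ((1 + ζ ⬝ᵥ W) • 1 - vecMulVec W ζ)ᵀ) := by
  have hζg : ζ ᵥ* g = g *ᵥ ζ := by rw [← vecMul_transpose, hg.eq]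
  rw [eq_inv_smul_iff₀ hΩ, ehlersT]
  simp only [transpose_sub, transpose_smul, transpose_one, transpose_vecMulVec, sub_mul, mul_sub,
    smul_mul_assoc, mul_smul_comm, one_mul, mul_one, vecMulVec_mul, mul_vecMulVec, hζg,
    vecMulVec_mulVec, op_smul_eq_smul, smul_vecMulVec, dotProduct_comm (g *ᵥ ζ) ζ, smul_sub,
    smul_smul, mul_div_cancel₀ _ hΩ]
  module

theorem ehlersT_mul_inv_smul (hg : g.IsSymm) (hginv : IsUnit g.det) (hΩ : 1 + ζ ⬝ᵥ W ≠ 0) :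
    ehlersT ζ W g * ((1 + ζ ⬝ᵥ W)⁻¹ • ((1 + vecMulVec ζ W) * g⁻¹ * (1 + vecMulVec W ζ))) = 1 := by
  rw [ehlersT_eq_inv_smul_mul_mul_transpose hg hΩ]
  set s := 1 + ζ ⬝ᵥ W
  set P : Matrix (Fin n) (Fin n) ℝ := s • 1 - vecMulVec W ζ
  have hP : P * (1 + vecMulVec W ζ) = s • 1 :=
    one_add_dotProduct_smul_sub_vecMulVec_mul_one_add_vecMulVec W ζ
  have hPt : Pᵀ * (1 + vecMulVec ζ W) = s • 1 := by
    simpa only [P, transpose_sub, transpose_smul, transpose_one, transpose_vecMulVec,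
      dotProduct_comm W ζ] using one_add_dotProduct_smul_sub_vecMulVec_mul_one_add_vecMulVec ζ W
  calc s⁻¹ • (P * g * Pᵀ) * (s⁻¹ • ((1 + vecMulVec ζ W) * g⁻¹ * (1 + vecMulVec W ζ)))
      = (s⁻¹ * s⁻¹) • (P * (g * (Pᵀ * (1 + vecMulVec ζ W) * (g⁻¹ * (1 + vecMulVec W ζ))))) := by
        rw [smul_mul_smul_comm]
        simp only [Matrix.mul_assoc]
    _ = (s⁻¹ * s⁻¹ * s) • (P * (1 + vecMulVec W ζ)) := by
        rw [hPt, smul_one_mul, mul_smul_comm, mul_nonsing_inv_cancel_left (A := g) _ hginv,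
          mul_smul_comm, smul_smul]
    _ = 1 := by
        rw [hP, smul_smul, inv_mul_cancel_right₀ hΩ, inv_mul_cancel₀ hΩ, one_smul]

end

/-- **Inverse of the transformed metric:** for an invertible symmetric `4 × 4`
real matrix `g` and `Ω² = 1 + ζᵀW > 0`, the matrix `T(ζ, W, g)` is invertible with
inverse `Ω⁻²·(g⁻¹ + (Wᵀg⁻¹W)·ζζᵀ + ζ(g⁻¹W)ᵀ + (g⁻¹W)ζᵀ)`. -/
theorem ehlersT_inv (g : Matrix (Fin 4) (Fin 4) ℝ) (hg : g.IsSymm)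
    (hginv : IsUnit g.det) (ζ W : Fin 4 → ℝ) (hΩ : 0 < 1 + ζ ⬝ᵥ W) :
    IsUnit (ehlersT ζ W g).det
    ∧ ehlersT ζ W g *
        ((1 + ζ ⬝ᵥ W)⁻¹ • (g⁻¹ + (W ⬝ᵥ g⁻¹ *ᵥ W) • vecMulVec ζ ζ
          + vecMulVec ζ (g⁻¹ *ᵥ W) + vecMulVec (g⁻¹ *ᵥ W) ζ)) = 1
    ∧ (ehlersT ζ W g)⁻¹
        = (1 + ζ ⬝ᵥ W)⁻¹ • (g⁻¹ + (W ⬝ᵥ g⁻¹ *ᵥ W) • vecMulVec ζ ζ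
          + vecMulVec ζ (g⁻¹ *ᵥ W) + vecMulVec (g⁻¹ *ᵥ W) ζ) := by
  have h := ehlersT_mul_inv_smul hg hginv hΩ.ne'
  rw [one_add_vecMulVec_mul_mul_one_add_vecMulVec hg.inv] at h
  exact ⟨isUnit_det_of_right_inverse h, h, inv_eq_right_inv h⟩
end

section
/- Let U be a smooth manifold, ζ a smooth vector field on U, and let G^ζ be the set of smooth one-forms W on U such that W(ζ)(p) > −1 for every p ∈ U. Define W²·W¹ := W² + (1 + W²(ζ))·W¹. Then: (i) for W¹, W² ∈ G^ζ one has 1 + (W²·W¹)(ζ) = (1 + W²(ζ))(1 + W¹(ζ)) pointwise, so W²·W¹ ∈ G^ζ; (ii) the operation · is associative on G^ζ; (iii) the zero one-form is a two-sided identity; (iv) every W ∈ G^ζ has the two-sided inverse −(1 + W(ζ))⁻¹·W, which lies in G^ζ. Hence (G^ζ, ·) is a group. -/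
/-!
All the algebra happens in a single cotangent space: for a covector `φ` at `p` put
`a(φ) = 1 + φ(ζ p)`. Then `a(ψ·φ) = a(ψ) a(φ)`, so associativity follows by expanding, the
condition `W(ζ) > -1`, i.e. `a > 0`, is stable under products, and `-a(φ)⁻¹ φ` is inverse to `φ`
because its `a` is `a(φ)⁻¹`. Smoothness is preserved because smooth one-forms are a module over
smooth functions and `W(ζ)` is smooth for smooth `W` and `ζ`.
-/

open Bundle
open scoped Manifold

section

variable {E : Type*} [NormedAddCommGroup E] [NormedSpace ℝ E]
  {H : Type*} [TopologicalSpace H] (I : ModelWithCorners ℝ E H)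
  {M : Type*} [TopologicalSpace M] [ChartedSpace H M] [IsManifold I ((⊤ : ℕ∞) : WithTop ℕ∞) M]

/-- A vector field is smooth if it is a smooth section of the tangent bundle. -/
def IsSmoothVectorField (ζ : ∀ x : M, TangentSpace I x) : Prop :=
  ContMDiff I I.tangent (⊤ : ℕ∞) (fun x => (⟨x, ζ x⟩ : TangentBundle I M))

/-- A one-form is smooth if it is a smooth section of the bundle of continuous
linear maps from the tangent bundle to the trivial real line bundle. -/
def IsSmoothOneForm (ω : ∀ x : M, TangentSpace I x →L[ℝ] ℝ) : Prop :=
  ContMDiff I (I.prod 𝓘(ℝ, E →L[ℝ] ℝ)) (⊤ : ℕ∞)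
    (fun x => (⟨x, ω x⟩ : TotalSpace (E →L[ℝ] ℝ)
      (fun x : M => TangentSpace I x →SL[RingHom.id ℝ] Bundle.Trivial M ℝ x)))

/-- The product `W²·W¹ := W² + (1 + W²(ζ))·W¹` of one-forms relative to the vector
field `ζ`. -/
noncomputable def oneFormMul (ζ : ∀ x : M, TangentSpace I x)
    (W2 W1 : ∀ x : M, TangentSpace I x →L[ℝ] ℝ) :
    ∀ x : M, TangentSpace I x →L[ℝ] ℝ :=
  fun x => W2 x + (1 + W2 x (ζ x)) • W1 x

section Covector

variable {V : Type*} [TopologicalSpace V] [AddCommGroup V] [Module ℝ V]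

/-- `oneFormMul I ζ W₂ W₁ x` is `covectorMul (ζ x) (W₂ x) (W₁ x)` by definition. -/
noncomputable def covectorMul (v : V) (φ ψ : V →L[ℝ] ℝ) : V →L[ℝ] ℝ :=
  φ + (1 + φ v) • ψ

noncomputable def covectorInv (v : V) (φ : V →L[ℝ] ℝ) : V →L[ℝ] ℝ :=
  -(1 + φ v)⁻¹ • φ

variable {v : V} {φ ψ χ : V →L[ℝ] ℝ}

lemma one_add_covectorMul_apply : 1 + covectorMul v φ ψ v = (1 + φ v) * (1 + ψ v) := by
  simp only [covectorMul, add_apply, smul_apply, smul_eq_mul]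
  ring

lemma covectorMul_assoc :
    covectorMul v (covectorMul v φ ψ) χ = covectorMul v φ (covectorMul v ψ χ) := by
  rw [covectorMul, one_add_covectorMul_apply]
  simp only [covectorMul, smul_add, smul_smul, add_assoc]

@[simp]
lemma covectorMul_zero : covectorMul v φ 0 = φ := by
  simp [covectorMul]

@[simp]
lemma zero_covectorMul : covectorMul v 0 φ = φ := by
  simp [covectorMul]

lemma one_add_covectorInv_apply (h : 1 + φ v ≠ 0) : 1 + covectorInv v φ v = (1 + φ v)⁻¹ := by
  simp only [covectorInv, smul_apply, smul_eq_mul]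
  field_simp
  ring

lemma covectorMul_covectorInv (h : 1 + φ v ≠ 0) : covectorMul v φ (covectorInv v φ) = 0 := by
  rw [covectorMul, covectorInv, smul_smul, mul_neg, mul_inv_cancel₀ h]
  module

lemma covectorInv_covectorMul (h : 1 + φ v ≠ 0) : covectorMul v (covectorInv v φ) φ = 0 := by
  rw [covectorMul, one_add_covectorInv_apply h, covectorInv]
  module

lemma neg_one_lt_covectorMul_apply (hφ : -1 < φ v) (hψ : -1 < ψ v) :
    -1 < covectorMul v φ ψ v := by
  rw [neg_lt_iff_pos_add', one_add_covectorMul_apply]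
  exact mul_pos (neg_lt_iff_pos_add'.1 hφ) (neg_lt_iff_pos_add'.1 hψ)

lemma neg_one_lt_covectorInv_apply (hφ : -1 < φ v) : -1 < covectorInv v φ v := by
  have hpos : 0 < 1 + φ v := neg_lt_iff_pos_add'.1 hφ
  rw [neg_lt_iff_pos_add', one_add_covectorInv_apply hpos.ne']
  exact inv_pos.2 hpos

end Covector

section SmoothOneForm

variable {I} {ζ : ∀ x : M, TangentSpace I x} {ω η W W₁ W₂ : ∀ x : M, TangentSpace I x →L[ℝ] ℝ}

lemma isSmoothOneForm_zero : IsSmoothOneForm I (0 : ∀ x : M, TangentSpace I x →L[ℝ] ℝ) :=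
  contMDiff_zeroSection _ _

lemma IsSmoothOneForm.add (hω : IsSmoothOneForm I ω) (hη : IsSmoothOneForm I η) :
    IsSmoothOneForm I (ω + η) :=
  hω.add_section hη

lemma IsSmoothOneForm.smul (hω : IsSmoothOneForm I ω) {f : M → ℝ}
    (hf : ContMDiff I 𝓘(ℝ) (⊤ : ℕ∞) f) : IsSmoothOneForm I (fun x => f x • ω x) :=
  hf.smul_section hω

lemma IsSmoothOneForm.contMDiff_apply (hω : IsSmoothOneForm I ω) (hζ : IsSmoothVectorField I ζ) :
    ContMDiff I 𝓘(ℝ) (⊤ : ℕ∞) (fun x => ω x (ζ x)) := fun x₀ =>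
  (contMDiffAt_section x₀).1 (hω.clm_bundle_apply (E₂ := Bundle.Trivial M ℝ) hζ x₀)

lemma IsSmoothOneForm.oneFormMul (hW₂ : IsSmoothOneForm I W₂) (hW₁ : IsSmoothOneForm I W₁)
    (hζ : IsSmoothVectorField I ζ) : IsSmoothOneForm I (oneFormMul I ζ W₂ W₁) :=
  hW₂.add (hW₁.smul (contMDiff_const.add (hW₂.contMDiff_apply hζ)))

lemma IsSmoothOneForm.covectorInv (hW : IsSmoothOneForm I W) (hζ : IsSmoothVectorField I ζ)
    (hne : ∀ x, 1 + W x (ζ x) ≠ 0) : IsSmoothOneForm I (fun x => covectorInv (ζ x) (W x)) :=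
  hW.smul ((contMDiff_const.add (hW.contMDiff_apply hζ)).inv₀ hne).neg

end SmoothOneForm

noncomputable abbrev oneFormGroup {ζ : ∀ x : M, TangentSpace I x} (hζ : IsSmoothVectorField I ζ) :
    Group {W : ∀ x : M, TangentSpace I x →L[ℝ] ℝ // IsSmoothOneForm I W ∧ ∀ x, -1 < W x (ζ x)} where
  mul W₂ W₁ := ⟨oneFormMul I ζ W₂.1 W₁.1, W₂.2.1.oneFormMul W₁.2.1 hζ,
    fun x => neg_one_lt_covectorMul_apply (W₂.2.2 x) (W₁.2.2 x)⟩
  mul_assoc _ _ _ := Subtype.ext <| funext fun _ => covectorMul_assoc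
  one := ⟨0, isSmoothOneForm_zero, fun _ => neg_one_lt_zero⟩
  one_mul _ := Subtype.ext <| funext fun _ => zero_covectorMul
  mul_one _ := Subtype.ext <| funext fun _ => covectorMul_zero
  inv W := ⟨fun x => covectorInv (ζ x) (W.1 x),
    W.2.1.covectorInv hζ fun x => (neg_lt_iff_pos_add'.1 (W.2.2 x)).ne',
    fun x => neg_one_lt_covectorInv_apply (W.2.2 x)⟩
  inv_mul_cancel W := Subtype.ext <| funext fun x =>
    covectorInv_covectorMul (neg_lt_iff_pos_add'.1 (W.2.2 x)).ne'

/-- **`(G^ζ, ·)` is a group** (Section 3 of the paper): for a smooth vector field `ζ`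
on a smooth manifold, the set `G^ζ` of smooth one-forms `W` with `W(ζ) > −1` everywhere
is a group under `W²·W¹ := W² + (1 + W²(ζ))·W¹`: (i) `G^ζ` is closed under `·` and
`1 + (W²·W¹)(ζ) = (1 + W²(ζ))(1 + W¹(ζ))` pointwise; (ii) `·` is associative;
(iii) the zero one-form is a two-sided identity; (iv) `−(1 + W(ζ))⁻¹·W` is a two-sided
inverse of `W`, lying in `G^ζ`. -/
theorem oneFormMul_group (ζ : ∀ x : M, TangentSpace I x)
    (hζ : IsSmoothVectorField I ζ) :
    -- (i) closure and the pointwise formula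
    (∀ W1 W2 : ∀ x : M, TangentSpace I x →L[ℝ] ℝ,
      IsSmoothOneForm I W1 → (∀ x, -1 < W1 x (ζ x)) →
      IsSmoothOneForm I W2 → (∀ x, -1 < W2 x (ζ x)) →
        (∀ x, 1 + oneFormMul I ζ W2 W1 x (ζ x) = (1 + W2 x (ζ x)) * (1 + W1 x (ζ x)))
        ∧ IsSmoothOneForm I (oneFormMul I ζ W2 W1)
        ∧ (∀ x, -1 < oneFormMul I ζ W2 W1 x (ζ x)))
    -- (ii) associativity on `G^ζ`
    ∧ (∀ W1 W2 W3 : ∀ x : M, TangentSpace I x →L[ℝ] ℝ,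
        IsSmoothOneForm I W1 → (∀ x, -1 < W1 x (ζ x)) →
        IsSmoothOneForm I W2 → (∀ x, -1 < W2 x (ζ x)) →
        IsSmoothOneForm I W3 → (∀ x, -1 < W3 x (ζ x)) →
        oneFormMul I ζ (oneFormMul I ζ W3 W2) W1 = oneFormMul I ζ W3 (oneFormMul I ζ W2 W1))
    -- (iii) the zero one-form is a two-sided identity
    ∧ (IsSmoothOneForm I (0 : ∀ x : M, TangentSpace I x →L[ℝ] ℝ)
        ∧ (∀ x, -1 < (0 : ∀ x : M, TangentSpace I x →L[ℝ] ℝ) x (ζ x))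
        ∧ ∀ W : ∀ x : M, TangentSpace I x →L[ℝ] ℝ,
            IsSmoothOneForm I W → (∀ x, -1 < W x (ζ x)) →
            oneFormMul I ζ W 0 = W ∧ oneFormMul I ζ 0 W = W)
    -- (iv) two-sided inverses
    ∧ (∀ W : ∀ x : M, TangentSpace I x →L[ℝ] ℝ,
        IsSmoothOneForm I W → (∀ x, -1 < W x (ζ x)) →
        IsSmoothOneForm I (fun x => -(1 + W x (ζ x))⁻¹ • W x)
        ∧ (∀ x, -1 < (-(1 + W x (ζ x))⁻¹ • W x) (ζ x))
        ∧ oneFormMul I ζ W (fun x => -(1 + W x (ζ x))⁻¹ • W x) = 0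
        ∧ oneFormMul I ζ (fun x => -(1 + W x (ζ x))⁻¹ • W x) W = 0)
    -- hence `(G^ζ, ·)` is a group
    ∧ ∃ i : Group {W : ∀ x : M, TangentSpace I x →L[ℝ] ℝ //
          IsSmoothOneForm I W ∧ ∀ x, -1 < W x (ζ x)},
        ∀ A B, (i.mul A B).val = oneFormMul I ζ A.val B.val := by
  refine ⟨fun W₁ W₂ hW₁ hW₁ζ hW₂ hW₂ζ => ?_, fun _ _ _ _ _ _ _ _ _ => ?_, ?_, fun W hW hWζ => ?_,
    oneFormGroup I hζ, fun _ _ => rfl⟩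
  · exact ⟨fun _ => one_add_covectorMul_apply, hW₂.oneFormMul hW₁ hζ,
      fun x => neg_one_lt_covectorMul_apply (hW₂ζ x) (hW₁ζ x)⟩
  · exact funext fun _ => covectorMul_assoc
  · exact ⟨isSmoothOneForm_zero, fun _ => neg_one_lt_zero,
      fun _ _ _ => ⟨funext fun _ => covectorMul_zero, funext fun _ => zero_covectorMul⟩⟩
  · have hne (x : M) : 1 + W x (ζ x) ≠ 0 := (neg_lt_iff_pos_add'.1 (hWζ x)).ne'
    exact ⟨hW.covectorInv hζ hne, fun x => neg_one_lt_covectorInv_apply (hWζ x),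
      funext fun x => covectorMul_covectorInv (hne x),
      funext fun x => covectorInv_covectorMul (hne x)⟩

end
end

section
/- Let 𝓕 be a self-dual complex antisymmetric 4×4 matrix and ξ ∈ ℝ⁴. Define σ_β := 2 ξ^α 𝓕_{αβ} (with ξ^α the components of ξ and sum over α), λ := −ξ^α η_{αβ} ξ^β, and 𝓕² := 𝓕_{αβ} η^{αγ} η^{βδ} 𝓕_{γδ}. Then σ_α η^{αβ} σ_β = −λ · 𝓕². -/
open Matrix Complex Finset

/-- The Minkowski metric `η = diag(−1,1,1,1)` (equal to its own inverse),
with entries regarded as complex numbers. -/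
def eta : Fin 4 → Fin 4 → ℂ := fun i j => if i = j then (if i = 0 then -1 else 1) else 0

/-- The Levi-Civita symbol `ε_{abcd}` on `{0,1,2,3}`: the sign of the permutation
`(a,b,c,d)` of `(0,1,2,3)`, and `0` if any index repeats. -/
def eps (a b c d : Fin 4) : ℂ :=
  Matrix.det (Matrix.of fun i j => if ![a, b, c, d] i = j then (1 : ℂ) else 0)

/-- A complex antisymmetric `4 × 4` matrix `X` is self-dual if its Hodge dual
`X*_{ab} = ½ ε_{abcd} η^{cm} η^{dn} X_{mn}` satisfies `X* = −iX`. -/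
def SelfDual (X : Matrix (Fin 4) (Fin 4) ℂ) : Prop :=
  ∀ a b, (1 / 2 : ℂ) * ∑ c, ∑ d, ∑ m, ∑ n, eps a b c d * eta c m * eta d n * X m n
    = -Complex.I * X a b

/-!
Self-duality expresses the spatial block of `F` through its electric part:
`F₂₃ = -i F₀₁`, `F₁₃ = i F₀₂`, `F₁₂ = -i F₀₃`. For such an `F` the contraction
`F_{mα} η^{αβ} F_{nβ}` is pure trace, namely `¼ η_{mn} 𝓕²`, and contracting it twice with `ξ`
gives `σ_α η^{αβ} σ_β = 4 ξ^m ξ^n · ¼ η_{mn} 𝓕² = -λ 𝓕²`.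
-/

section LeviCivita

variable (a b c d : Fin 4)

theorem eps_eq_zero_of_eq {i j : Fin 4} (hij : i ≠ j) (h : ![a, b, c, d] i = ![a, b, c, d] j) :
    eps a b c d = 0 :=
  Matrix.det_zero_of_row_eq hij (by ext k; simp [h])

-- `eps_self_ij`: the `i`-th and `j`-th indices coincide.
theorem eps_self_02 : eps a b a d = 0 := eps_eq_zero_of_eq a b a d (i := 0) (j := 2) (by decide) rfl
theorem eps_self_03 : eps a b c a = 0 := eps_eq_zero_of_eq a b c a (i := 0) (j := 3) (by decide) rfl
theorem eps_self_12 : eps a b b d = 0 := eps_eq_zero_of_eq a b b d (i := 1) (j := 2) (by decide) rfl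
theorem eps_self_13 : eps a b c b = 0 := eps_eq_zero_of_eq a b c b (i := 1) (j := 3) (by decide) rfl
theorem eps_self_23 : eps a b c c = 0 := eps_eq_zero_of_eq a b c c (i := 2) (j := 3) (by decide) rfl

end LeviCivita

theorem eps_values :
    eps 0 1 2 3 = 1 ∧ eps 0 1 3 2 = -1 ∧ eps 0 2 1 3 = -1 ∧ eps 0 2 3 1 = 1 ∧
      eps 0 3 1 2 = 1 ∧ eps 0 3 2 1 = -1 := by
  refine ⟨?_, ?_, ?_, ?_, ?_, ?_⟩ <;>
    simp [eps, Matrix.det_succ_row_zero, Fin.sum_univ_succ, Fin.succAbove, Fin.succ, Fin.castSucc]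

theorem apply_eq_neg_of_transpose_eq_neg {ι R : Type*} [Neg R] {F : Matrix ι ι R} (hFa : Fᵀ = -F)
    (i j : ι) : F j i = -F i j := by
  simpa using congrFun (congrFun hFa i) j

theorem SelfDual.entries {F : Matrix (Fin 4) (Fin 4) ℂ} (hFa : Fᵀ = -F) (hF : SelfDual F) :
    F 2 3 = -I * F 0 1 ∧ F 1 3 = I * F 0 2 ∧ F 1 2 = -I * F 0 3 := by
  have hA := apply_eq_neg_of_transpose_eq_neg hFa
  obtain ⟨e0123, e0132, e0213, e0231, e0312, e0321⟩ := eps_values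
  have h01 := hF 0 1
  have h02 := hF 0 2
  have h03 := hF 0 3
  simp only [Fin.sum_univ_four, _root_.eta, reduceIte, Fin.reduceEq, eps_self_02, eps_self_03,
    eps_self_12, eps_self_13, eps_self_23, e0123, e0132, e0213, e0231, e0312, e0321] at h01 h02 h03
  refine ⟨?_, ?_, ?_⟩
  · linear_combination h01 + hA 2 3 / 2
  · linear_combination -h02 + hA 1 3 / 2
  · linear_combination h03 + hA 1 2 / 2

theorem fin_four_cases (m : Fin 4) : m = 0 ∨ m = 1 ∨ m = 2 ∨ m = 3 := by
  fin_cases m <;> simp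

theorem SelfDual.contraction {F : Matrix (Fin 4) (Fin 4) ℂ} (hFa : Fᵀ = -F) (hF : SelfDual F)
    (m n : Fin 4) :
    ∑ a, ∑ b, F m a * eta a b * F n b
      = eta m n / 4 * ∑ a, ∑ b, ∑ c, ∑ d, F a b * eta a c * eta b d * F c d := by
  have hA := apply_eq_neg_of_transpose_eq_neg hFa
  have hd (i : Fin 4) : F i i = 0 := by linear_combination hA i i / 2
  obtain ⟨h23, h13, h12⟩ := hF.entries hFa
  rcases fin_four_cases m with rfl | rfl | rfl | rfl <;>
  rcases fin_four_cases n with rfl | rfl | rfl | rfl <;>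
    simp only [Fin.sum_univ_four] <;>
    simp only [_root_.eta, reduceIte, Fin.reduceEq] <;>
    simp only [hd, hA 0 1, hA 0 2, hA 0 3, hA 1 2, hA 1 3, hA 2 3, h23, h13, h12] <;>
    ring_nf <;> simp only [I_sq] <;> ring

/-- **Norm of the Ernst one-form:** for a self-dual `𝓕` and `ξ ∈ ℝ⁴`, with
`σ_β = 2 ξ^α 𝓕_{αβ}`, `λ = −ξ^α η_{αβ} ξ^β` and `𝓕² = 𝓕_{αβ} η^{αγ} η^{βδ} 𝓕_{γδ}`,
one has `σ_α η^{αβ} σ_β = −λ 𝓕²`. -/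
theorem ernst_norm_identity (F : Matrix (Fin 4) (Fin 4) ℂ)
    (hFa : Fᵀ = -F) (hF : SelfDual F) (ξ : Fin 4 → ℝ) :
    (∑ a, ∑ b, (2 * ∑ m, (ξ m : ℂ) * F m a) * eta a b * (2 * ∑ m, (ξ m : ℂ) * F m b))
      = -(-∑ a, ∑ b, (ξ a : ℂ) * eta a b * (ξ b : ℂ))
          * (∑ a, ∑ b, ∑ c, ∑ d, F a b * eta a c * eta b d * F c d) := by
  set F2 := ∑ a, ∑ b, ∑ c, ∑ d, F a b * eta a c * eta b d * F c d
  have hc (m n : Fin 4) : ∑ a, ∑ b, F m a * eta a b * F n b = eta m n / 4 * F2 :=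
    hF.contraction hFa m n
  calc _ = 4 * ∑ m, ∑ n, (ξ m : ℂ) * ξ n * ∑ a, ∑ b, F m a * eta a b * F n b := by
        simp only [Fin.sum_univ_four]
        ring
    _ = 4 * ∑ m, ∑ n, (ξ m : ℂ) * ξ n * (eta m n / 4 * F2) := by
        simp only [hc]
    _ = _ := by
        rw [neg_neg, sum_mul, mul_sum]
        refine sum_congr rfl fun m _ => ?_
        rw [sum_mul, mul_sum]
        refine sum_congr rfl fun n _ => ?_
        ring
end

section
/- Let 𝓕 be a self-dual complex antisymmetric 4×4 matrix and ξ ∈ ℝ⁴, and set σ_β := 2 ξ^α 𝓕_{αβ}. Then for all indices α, β, ρ: ε_{αβμν} ξ^μ η^{ρσ} η^{ντ} 𝓕_{στ} = −i ξ^ρ 𝓕_{αβ} + (i/2)( δ^ρ_α σ_β − δ^ρ_β σ_α ), where δ^ρ_α is the Kronecker delta, ξ^μ are the components of ξ, and repeated indices are summed. -/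
open Matrix Complex Finset

/-!
Antisymmetry and self-duality leave only the three "electric" components `F₀ᵢ` free: the
spatial block is `Fⱼₖ = -i εᵢⱼₖ F₀ᵢ`. Substituting this parametrisation, both sides of the
identity become explicit bilinear expressions in `ξ` and `(F₀₁, F₀₂, F₀₃)`, which agree
component by component once `ε` is evaluated through its product formula.
-/

theorem eps_eq_intSign_prod (a b c d : Fin 4) :
    eps a b c d = ((Int.sign (((b : ℕ) - a : ℤ) * ((c : ℕ) - a) * ((d : ℕ) - a)
      * ((c : ℕ) - b) * ((d : ℕ) - b) * ((d : ℕ) - c)) : ℤ) : ℂ) := by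
  have hdet : (Matrix.of fun i j => if ![a, b, c, d] i = j then (1 : ℤ) else 0).det =
      Int.sign (((b : ℕ) - a : ℤ) * ((c : ℕ) - a) * ((d : ℕ) - a)
        * ((c : ℕ) - b) * ((d : ℕ) - b) * ((d : ℕ) - c)) := by
    revert a b c d; decide
  rw [eps, ← hdet, Int.cast_det]
  congr 1
  ext i j
  simp [apply_ite]

theorem sum_eta_mul (r : Fin 4) (f : Fin 4 → ℂ) : ∑ s, eta r s * f s = eta r r * f r := by
  simp [_root_.eta, ite_mul]

theorem sum_sum_eta_mul_eta_mul (c d : Fin 4) (X : Matrix (Fin 4) (Fin 4) ℂ) :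
    ∑ m, ∑ n, eta c m * eta d n * X m n = eta c c * eta d d * X c d := by
  simp_rw [mul_assoc, ← mul_sum, sum_eta_mul]

theorem sum_eps_mul_eta_mul_eta (a b r : Fin 4) (ξ : Fin 4 → ℂ) (X : Matrix (Fin 4) (Fin 4) ℂ) :
    ∑ m, ∑ s, ∑ n, ∑ t, eps a b m n * ξ m * eta r s * eta n t * X s t
      = ∑ m, ∑ n, eps a b m n * ξ m * (eta r r * eta n n * X r n) := by
  refine sum_congr rfl fun m _ => ?_
  rw [sum_comm]
  refine sum_congr rfl fun n _ => ?_
  simp_rw [← sum_sum_eta_mul_eta_mul, mul_sum]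
  refine sum_congr rfl fun s _ => sum_congr rfl fun t _ => ?_
  ring

theorem selfDual_iff (X : Matrix (Fin 4) (Fin 4) ℂ) : SelfDual X ↔
    ∀ a b, (1 / 2 : ℂ) * ∑ c, ∑ d, eps a b c d * (eta c c * eta d d * X c d) = -I * X a b := by
  simp_rw [SelfDual, ← sum_sum_eta_mul_eta_mul, mul_sum, mul_assoc]

def selfDualMatrix (e₁ e₂ e₃ : ℂ) : Matrix (Fin 4) (Fin 4) ℂ :=
  !![0, e₁, e₂, e₃; -e₁, 0, -I * e₃, I * e₂; -e₂, I * e₃, 0, -I * e₁; -e₃, -I * e₂, I * e₁, 0]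

theorem eq_selfDualMatrix {F : Matrix (Fin 4) (Fin 4) ℂ} (hFa : Fᵀ = -F) (hF : SelfDual F) :
    F = selfDualMatrix (F 0 1) (F 0 2) (F 0 3) := by
  have hA (i j : Fin 4) : F j i = -F i j := congrFun (congrFun hFa i) j
  have h23 := (selfDual_iff F).1 hF 0 1
  have h31 := (selfDual_iff F).1 hF 0 2
  have h12 := (selfDual_iff F).1 hF 0 3
  simp [Fin.sum_univ_four, eps_eq_intSign_prod, Int.sign_eq_one_of_pos, _root_.eta] at h23 h31 h12
  ext i j
  fin_cases i <;> fin_cases j <;> simp [selfDualMatrix] <;> grind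

theorem sum_eps_mul_selfDualMatrix (e₁ e₂ e₃ : ℂ) (ξ : Fin 4 → ℂ) (a b r : Fin 4) :
    ∑ m, ∑ n, eps a b m n * ξ m * (eta r r * eta n n * selfDualMatrix e₁ e₂ e₃ r n)
      = -I * ξ r * selfDualMatrix e₁ e₂ e₃ a b
        + I / 2 * ((if r = a then 1 else 0) * (2 * ∑ m, ξ m * selfDualMatrix e₁ e₂ e₃ m b)
          - (if r = b then 1 else 0) * (2 * ∑ m, ξ m * selfDualMatrix e₁ e₂ e₃ m a)) := by
  -- `ε` does not involve `r`, so it is evaluated once per `(a, b)` before splitting on `r`.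
  revert r
  fin_cases a <;> fin_cases b <;>
    simp [Fin.sum_univ_four, eps_eq_intSign_prod, Int.sign_eq_one_of_pos] <;>
    intro r <;> fin_cases r <;> simp [_root_.eta, selfDualMatrix] <;> grind [I_sq]

/-- **Identity (xiF):** for a self-dual `𝓕` and `ξ ∈ ℝ⁴`, with `σ_β = 2 ξ^α 𝓕_{αβ}`,
`ε_{αβμν} ξ^μ η^{ρσ} η^{ντ} 𝓕_{στ} = −i ξ^ρ 𝓕_{αβ} + (i/2)(δ^ρ_α σ_β − δ^ρ_β σ_α)`. -/
theorem eps_xi_selfDual_identity (F : Matrix (Fin 4) (Fin 4) ℂ)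
    (hFa : Fᵀ = -F) (hF : SelfDual F) (ξ : Fin 4 → ℝ) :
    ∀ a b r : Fin 4,
      (∑ m, ∑ s, ∑ n, ∑ t, eps a b m n * (ξ m : ℂ) * eta r s * eta n t * F s t)
        = -Complex.I * (ξ r : ℂ) * F a b
          + Complex.I / 2 *
            ((if r = a then 1 else 0) * (2 * ∑ m, (ξ m : ℂ) * F m b)
              - (if r = b then 1 else 0) * (2 * ∑ m, (ξ m : ℂ) * F m a)) := by
  intro a b r
  obtain ⟨e₁, e₂, e₃, rfl⟩ : ∃ e₁ e₂ e₃, F = selfDualMatrix e₁ e₂ e₃ :=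
    ⟨_, _, _, eq_selfDualMatrix hFa hF⟩
  rw [sum_eps_mul_eta_mul_eta]
  exact sum_eps_mul_selfDualMatrix e₁ e₂ e₃ (fun m => (ξ m : ℂ)) a b r
end

section
/- Let 𝓕 be a self-dual complex antisymmetric 4×4 matrix, ξ ∈ ℝ⁴, and set F := Re(𝓕) (entrywise real part), σ_β := 2 ξ^α 𝓕_{αβ}, λ := −ξ^α η_{αβ} ξ^β, 𝓕² := 𝓕_{αβ} η^{αγ} η^{βδ} 𝓕_{γδ}, and ξ_α := η_{αβ} ξ^β. Then for all α, β: σ_β Re(σ_α) + σ_α Re(σ_β) − η_{αβ} σ^μ Re(σ_μ) + 2 ξ_β σ^μ F_{αμ} + 2 ξ_α σ^μ F_{βμ} − 4 λ F_α{}^μ 𝓕_{μβ} = σ_α σ_β + 𝓕² ( λ η_{αβ} + ξ_α ξ_β ), where σ^μ = η^{μν} σ_ν, F_α{}^μ = F_{αν} η^{νμ}, and repeated indices are summed. -/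
open Matrix Complex Finset

private lemma detfour (M : Matrix (Fin 4) (Fin 4) ℂ) : M.det =
    M 0 0 * (M 1 1 * (M 2 2 * M 3 3 - M 2 3 * M 3 2) - M 1 2 * (M 2 1 * M 3 3 - M 2 3 * M 3 1)
      + M 1 3 * (M 2 1 * M 3 2 - M 2 2 * M 3 1))
    - M 0 1 * (M 1 0 * (M 2 2 * M 3 3 - M 2 3 * M 3 2) - M 1 2 * (M 2 0 * M 3 3 - M 2 3 * M 3 0)
      + M 1 3 * (M 2 0 * M 3 2 - M 2 2 * M 3 0))
    + M 0 2 * (M 1 0 * (M 2 1 * M 3 3 - M 2 3 * M 3 1) - M 1 1 * (M 2 0 * M 3 3 - M 2 3 * M 3 0)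
      + M 1 3 * (M 2 0 * M 3 1 - M 2 1 * M 3 0))
    - M 0 3 * (M 1 0 * (M 2 1 * M 3 2 - M 2 2 * M 3 1) - M 1 1 * (M 2 0 * M 3 2 - M 2 2 * M 3 0)
      + M 1 2 * (M 2 0 * M 3 1 - M 2 1 * M 3 0)) := by
  simp [Matrix.det_succ_row_zero, Fin.sum_univ_succ, Fin.succAbove,
    show (Fin.succ 2 : Fin 4) = 3 from rfl, show (Fin.castSucc 2 : Fin 4) = 2 from rfl,
    show ((1:Fin 4) < 3) = True from by simp, show (Fin.succ 0 : Fin 4) = 1 from rfl,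
    show (Fin.succ 1 : Fin 4) = 2 from rfl]
  ring

set_option maxHeartbeats 4000000 in
private lemma key (x1 y1 x2 y2 x3 y3 : ℝ) (ξ : Fin 4 → ℝ)
    (F : Matrix (Fin 4) (Fin 4) ℂ)
    (h00 : F 0 0 = 0) (h11 : F 1 1 = 0) (h22 : F 2 2 = 0) (h33 : F 3 3 = 0)
    (h01 : F 0 1 = (x1:ℂ) + y1 * Complex.I) (h02 : F 0 2 = (x2:ℂ) + y2 * Complex.I)
    (h03 : F 0 3 = (x3:ℂ) + y3 * Complex.I)
    (h10 : F 1 0 = -((x1:ℂ) + y1 * Complex.I)) (h20 : F 2 0 = -((x2:ℂ) + y2 * Complex.I))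
    (h30 : F 3 0 = -((x3:ℂ) + y3 * Complex.I))
    (h23 : F 2 3 = -Complex.I * ((x1:ℂ) + y1 * Complex.I))
    (h32 : F 3 2 = Complex.I * ((x1:ℂ) + y1 * Complex.I))
    (h31 : F 3 1 = -Complex.I * ((x2:ℂ) + y2 * Complex.I))
    (h13 : F 1 3 = Complex.I * ((x2:ℂ) + y2 * Complex.I))
    (h12 : F 1 2 = -Complex.I * ((x3:ℂ) + y3 * Complex.I))
    (h21 : F 2 1 = Complex.I * ((x3:ℂ) + y3 * Complex.I)) :
    ∀ a b : Fin 4,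
      (fun b => 2 * ∑ a, (ξ a : ℂ) * F a b) b * (((fun b => 2 * ∑ a, (ξ a : ℂ) * F a b) a).re : ℂ)
        + (fun b => 2 * ∑ a, (ξ a : ℂ) * F a b) a * (((fun b => 2 * ∑ a, (ξ a : ℂ) * F a b) b).re : ℂ)
        - eta a b * (∑ m, (fun m => ∑ n, eta m n * (fun b => 2 * ∑ a, (ξ a : ℂ) * F a b) n) m * ((((fun b => 2 * ∑ a, (ξ a : ℂ) * F a b)) m).re : ℂ))
        + 2 * (fun a => ∑ b, eta a b * (ξ b : ℂ)) b * (∑ m, (fun m => ∑ n, eta m n * (fun b => 2 * ∑ a, (ξ a : ℂ) * F a b) n) m * (fun a b => ((F a b).re : ℂ)) a m)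
        + 2 * (fun a => ∑ b, eta a b * (ξ b : ℂ)) a * (∑ m, (fun m => ∑ n, eta m n * (fun b => 2 * ∑ a, (ξ a : ℂ) * F a b) n) m * (fun a b => ((F a b).re : ℂ)) b m)
        - 4 * (-∑ a, ∑ b, (ξ a : ℂ) * eta a b * (ξ b : ℂ)) * (∑ m, (∑ n, (fun a b => ((F a b).re : ℂ)) a n * eta n m) * F m b)
      = (fun b => 2 * ∑ a, (ξ a : ℂ) * F a b) a * (fun b => 2 * ∑ a, (ξ a : ℂ) * F a b) b
        + (∑ a, ∑ b, ∑ c, ∑ d, F a b * eta a c * eta b d * F c d) *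
          ((-∑ a, ∑ b, (ξ a : ℂ) * eta a b * (ξ b : ℂ)) * eta a b
            + (fun a => ∑ b, eta a b * (ξ b : ℂ)) a * (fun a => ∑ b, eta a b * (ξ b : ℂ)) b) := by
  intro a b
  fin_cases a <;> fin_cases b <;>
  · simp only [_root_.eta, Fin.sum_univ_four, Fin.isValue, reduceIte, Fin.reduceEq,
      h00, h11, h22, h33, h01, h02, h03, h10, h20, h30, h23, h32, h31, h13, h12, h21,
      mul_zero, zero_mul, mul_one, one_mul, add_zero, zero_add, neg_zero, neg_mul,
      mul_neg, neg_neg, Complex.add_re, Complex.mul_re, Complex.neg_re, Complex.add_im,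
      Complex.mul_im, Complex.neg_im, Complex.I_re, Complex.I_im, Complex.ofReal_re,
      Complex.ofReal_im,
      Complex.re_ofNat, Complex.im_ofNat, Complex.sub_re, Complex.sub_im, Complex.zero_re, Complex.zero_im,
      show (⟨0, by norm_num⟩ : Fin 4) = 0 from rfl, show (⟨1, by norm_num⟩ : Fin 4) = 1 from rfl,
      show (⟨2, by norm_num⟩ : Fin 4) = 2 from rfl, show (⟨3, by norm_num⟩ : Fin 4) = 3 from rfl]
    push_cast
    apply Complex.ext <;>
    · simp [Complex.add_re, Complex.mul_re, Complex.neg_re, Complex.add_im,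
        Complex.mul_im, Complex.neg_im, Complex.I_re, Complex.I_im, Complex.ofReal_re,
        Complex.ofReal_im, Complex.sub_re, Complex.sub_im]
      ring

set_option maxHeartbeats 1000000 in
set_option maxRecDepth 10000 in
/-- **Identity (qq1):** for a self-dual `𝓕`, `ξ ∈ ℝ⁴`, with `F = Re 𝓕`,
`σ_β = 2 ξ^α 𝓕_{αβ}`, `σ^μ = η^{μν} σ_ν`, `λ = −ξ^α η_{αβ} ξ^β`, `ξ_α = η_{αβ} ξ^β`
and `𝓕² = 𝓕_{αβ} η^{αγ} η^{βδ} 𝓕_{γδ}`: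
`σ_β Re(σ_α) + σ_α Re(σ_β) − η_{αβ} σ^μ Re(σ_μ) + 2 ξ_β σ^μ F_{αμ} + 2 ξ_α σ^μ F_{βμ}
  − 4λ F_α{}^μ 𝓕_{μβ} = σ_α σ_β + 𝓕² (λ η_{αβ} + ξ_α ξ_β)`. -/
theorem identity_qq1 (F : Matrix (Fin 4) (Fin 4) ℂ)
    (hFa : Fᵀ = -F) (hF : SelfDual F) (ξ : Fin 4 → ℝ)
    (Fre : Matrix (Fin 4) (Fin 4) ℂ) (hFre : Fre = fun a b => ((F a b).re : ℂ))
    (σ : Fin 4 → ℂ) (hσ : σ = fun b => 2 * ∑ a, (ξ a : ℂ) * F a b)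
    (σup : Fin 4 → ℂ) (hσup : σup = fun m => ∑ n, eta m n * σ n)
    (ξdown : Fin 4 → ℂ) (hξdown : ξdown = fun a => ∑ b, eta a b * (ξ b : ℂ))
    (lam : ℂ) (hlam : lam = -∑ a, ∑ b, (ξ a : ℂ) * eta a b * (ξ b : ℂ))
    (F2 : ℂ) (hF2 : F2 = ∑ a, ∑ b, ∑ c, ∑ d, F a b * eta a c * eta b d * F c d) :
    ∀ a b : Fin 4,
      σ b * ((σ a).re : ℂ) + σ a * ((σ b).re : ℂ)
        - eta a b * (∑ m, σup m * ((σ m).re : ℂ))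
        + 2 * ξdown b * (∑ m, σup m * Fre a m)
        + 2 * ξdown a * (∑ m, σup m * Fre b m)
        - 4 * lam * (∑ m, (∑ n, Fre a n * eta n m) * F m b)
      = σ a * σ b + F2 * (lam * eta a b + ξdown a * ξdown b) := by
  have hanti : ∀ i j, F j i = -F i j := by
    intro i j; have := congrFun (congrFun hFa i) j
    simpa [Matrix.transpose_apply] using this
  have hdiag : ∀ i, F i i = 0 := by
    intro i; have := hanti i i; linear_combination this / 2
  have hd1 : F 2 3 = -Complex.I * F 0 1 := by
    have h01 := hF 0 1
    simp only [eps, _root_.eta, Fin.sum_univ_four, detfour, Matrix.of_apply,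
      Matrix.cons_val', Matrix.cons_val_zero, Matrix.cons_val_one, Matrix.head_cons,
      Matrix.cons_val_two, Matrix.cons_val_three, Matrix.tail_cons, Matrix.empty_val',
      Matrix.cons_val_fin_one, Matrix.head_fin_const, Fin.isValue, reduceIte,
      Fin.reduceEq, mul_zero, zero_mul, mul_one, one_mul, add_zero, zero_add, neg_zero,
      mul_neg, neg_neg, sub_zero, zero_sub, sub_self, neg_mul] at h01
    linear_combination h01 + hanti 3 2 / 2
  have hd2 : F 3 1 = -Complex.I * F 0 2 := by
    have h02 := hF 0 2
    simp only [eps, _root_.eta, Fin.sum_univ_four, detfour, Matrix.of_apply,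
      Matrix.cons_val', Matrix.cons_val_zero, Matrix.cons_val_one, Matrix.head_cons,
      Matrix.cons_val_two, Matrix.cons_val_three, Matrix.tail_cons, Matrix.empty_val',
      Matrix.cons_val_fin_one, Matrix.head_fin_const, Fin.isValue, reduceIte,
      Fin.reduceEq, mul_zero, zero_mul, mul_one, one_mul, add_zero, zero_add, neg_zero,
      mul_neg, neg_neg, sub_zero, zero_sub, sub_self, neg_mul] at h02
    linear_combination h02 + hanti 1 3 / 2
  have hd3 : F 1 2 = -Complex.I * F 0 3 := by
    have h03 := hF 0 3
    simp only [eps, _root_.eta, Fin.sum_univ_four, detfour, Matrix.of_apply,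
      Matrix.cons_val', Matrix.cons_val_zero, Matrix.cons_val_one, Matrix.head_cons,
      Matrix.cons_val_two, Matrix.cons_val_three, Matrix.tail_cons, Matrix.empty_val',
      Matrix.cons_val_fin_one, Matrix.head_fin_const, Fin.isValue, reduceIte,
      Fin.reduceEq, mul_zero, zero_mul, mul_one, one_mul, add_zero, zero_add, neg_zero,
      mul_neg, neg_neg, sub_zero, zero_sub, sub_self, neg_mul] at h03
    linear_combination h03 + hanti 2 1 / 2
  have h01e : F 0 1 = ((F 0 1).re : ℂ) + (F 0 1).im * Complex.I := (Complex.re_add_im _).symm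
  have h02e : F 0 2 = ((F 0 2).re : ℂ) + (F 0 2).im * Complex.I := (Complex.re_add_im _).symm
  have h03e : F 0 3 = ((F 0 3).re : ℂ) + (F 0 3).im * Complex.I := (Complex.re_add_im _).symm
  subst hFre hσ hσup hξdown hlam hF2
  exact key (F 0 1).re (F 0 1).im (F 0 2).re (F 0 2).im (F 0 3).re (F 0 3).im ξ F
    (hdiag 0) (hdiag 1) (hdiag 2) (hdiag 3) h01e h02e h03e
    (by linear_combination hanti 0 1 - h01e) (by linear_combination hanti 0 2 - h02e)
    (by linear_combination hanti 0 3 - h03e)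
    (by linear_combination hd1 - Complex.I * h01e)
    (by linear_combination hanti 2 3 - hd1 + Complex.I * h01e)
    (by linear_combination hd2 - Complex.I * h02e)
    (by linear_combination hanti 3 1 - hd2 + Complex.I * h02e)
    (by linear_combination hd3 - Complex.I * h03e)
    (by linear_combination hanti 1 2 - hd3 + Complex.I * h03e)
end

section
/- Let α, β, γ, δ ∈ ℝ with αδ + βγ = 1, and let A, c ∈ ℂ with δ + iγc ≠ 0. Define c' = (αc + iβ)/(δ + iγc) and A' = A·(δ + iγc)⁴. Then c' + c̄' = (c + c̄)/|δ + iγc|², and |A'|²·(c' + c̄')⁴ = |A|²·(c + c̄)⁴. In particular, Re(c') is positive, zero, or negative exactly when Re(c) is positive, zero, or negative, respectively. -/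
open Complex

/-! The Ehlers action on `c` is the Möbius map `c ↦ (αc + iβ)/(δ + iγc)`; since `αδ + βγ = 1` it
rescales the real part by the positive factor `|δ + iγc|⁻²`. The weight `|A|²` picks up
`|δ + iγc|⁸`, which cancels exactly against the fourth power of that factor. -/

/-- When `δ + iγc = 0` both sides are the junk value `0`. -/
theorem re_ehlers_div {α β γ δ : ℝ} (h : α * δ + β * γ = 1) (c : ℂ) :
    ((α * c + I * β) / ((δ : ℂ) + I * γ * c)).re = c.re / ‖(δ : ℂ) + I * γ * c‖ ^ 2 := by
  rw [div_re, ← add_div, ← normSq_eq_norm_sq]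
  congr 1
  simp only [add_re, add_im, mul_re, mul_im, I_re, I_im, ofReal_re, ofReal_im]
  linear_combination c.re * h

theorem ehlers_div_add_conj {α β γ δ : ℝ} (h : α * δ + β * γ = 1) (c : ℂ) :
    (α * c + I * β) / ((δ : ℂ) + I * γ * c)
        + starRingEnd ℂ ((α * c + I * β) / ((δ : ℂ) + I * γ * c))
      = (c + starRingEnd ℂ c) / ((‖(δ : ℂ) + I * γ * c‖ ^ 2 : ℝ) : ℂ) := by
  rw [add_conj, add_conj, re_ehlers_div h]
  push_cast
  ring

theorem ofReal_norm_mul_pow_four_sq_mul_div_pow_four (A : ℂ) {d : ℂ} (hd : d ≠ 0) (z : ℂ) :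
    ((‖A * d ^ 4‖ ^ 2 : ℝ) : ℂ) * (z / ((‖d‖ ^ 2 : ℝ) : ℂ)) ^ 4 = ((‖A‖ ^ 2 : ℝ) : ℂ) * z ^ 4 := by
  have hnorm : ((‖d‖ ^ 2 : ℝ) : ℂ) ≠ 0 := by exact_mod_cast (pow_pos (norm_pos_iff.mpr hd) 2).ne'
  rw [norm_mul, norm_pow]
  field_simp
  push_cast
  ring

/-- **Invariant of the Ehlers action on the parameters `(A, c)`:** with
`c' = (αc + iβ)/(δ + iγc)` and `A' = A(δ + iγc)⁴` (`αδ + βγ = 1`, `δ + iγc ≠ 0`),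
one has `c' + c̄' = (c + c̄)/|δ + iγc|²` and `|A'|²(c' + c̄')⁴ = |A|²(c + c̄)⁴`;
in particular `Re c'` is positive, zero, or negative exactly when `Re c` is. -/
theorem ehlers_action_invariant (α β γ δ : ℝ) (h : α * δ + β * γ = 1)
    (A c : ℂ) (hc : (δ : ℂ) + I * γ * c ≠ 0) :
    ((α * c + I * β) / ((δ : ℂ) + I * γ * c)
        + starRingEnd ℂ ((α * c + I * β) / ((δ : ℂ) + I * γ * c))
      = (c + starRingEnd ℂ c) / ((‖(δ : ℂ) + I * γ * c‖ ^ 2 : ℝ) : ℂ))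
    ∧ ((‖A * ((δ : ℂ) + I * γ * c) ^ 4‖ ^ 2 : ℝ) : ℂ)
        * ((α * c + I * β) / ((δ : ℂ) + I * γ * c)
            + starRingEnd ℂ ((α * c + I * β) / ((δ : ℂ) + I * γ * c))) ^ 4
      = ((‖A‖ ^ 2 : ℝ) : ℂ) * (c + starRingEnd ℂ c) ^ 4
    ∧ (0 < ((α * c + I * β) / ((δ : ℂ) + I * γ * c)).re ↔ 0 < c.re)
    ∧ (((α * c + I * β) / ((δ : ℂ) + I * γ * c)).re = 0 ↔ c.re = 0)
    ∧ (((α * c + I * β) / ((δ : ℂ) + I * γ * c)).re < 0 ↔ c.re < 0) := by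
  have hpos : 0 < ‖(δ : ℂ) + I * γ * c‖ ^ 2 := pow_pos (norm_pos_iff.mpr hc) 2
  refine ⟨ehlers_div_add_conj h c, ?_, ?_, ?_, ?_⟩
  · rw [ehlers_div_add_conj h c]
    exact ofReal_norm_mul_pow_four_sq_mul_div_pow_four A hc _
  all_goals rw [re_ehlers_div h]
  · exact div_pos_iff_of_pos_right hpos
  · exact div_eq_zero_iff.trans (or_iff_left hpos.ne')
  · rw [div_lt_iff₀ hpos, zero_mul]
end

section
/- Let A, c ∈ ℂ with A ≠ 0 and Re(c) ≠ 0, and let s = 1 if Re(c) > 0 and s = −1 if Re(c) < 0. Then there exist α, β, γ, δ ∈ ℝ with αδ + βγ = 1 and δ + iγc ≠ 0 such that (αc + iβ)/(δ + iγc) = s and A·(δ + iγc)⁴ = −|A|·(Re c)². -/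
open Complex
open ComplexConjugate

/-!
Take `w` a fourth root of `-‖A‖ (Re c)² / A`; comparing moduli gives `|w|² = |Re c|`. Since
`Re c ≠ 0`, both `δ + iγc` and `αc + iβ` range over all of `ℂ` as the real parameters vary, so
we may choose them equal to `w` and `s w`. The determinant is then forced: for any parameters,
`Re (conj (δ + iγc) · (αc + iβ)) = Re c · (αδ + βγ)`, and here the left side is `s |w|² = Re c`.
-/

namespace Complex

theorem re_conj_mul_eq_re_mul (c : ℂ) (α β γ δ : ℝ) :
    (conj ((δ : ℂ) + I * γ * c) * (α * c + I * β)).re = c.re * (α * δ + β * γ) := by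
  simp only [mul_re, mul_im, add_re, add_im, conj_re, conj_im, ofReal_re, ofReal_im,
    I_re, I_im]
  ring

theorem exists_ofReal_add_I_mul_mul_eq {c : ℂ} (hc : c.re ≠ 0) (z : ℂ) :
    ∃ δ γ : ℝ, (δ : ℂ) + I * γ * c = z := by
  refine ⟨z.re + z.im / c.re * c.im, z.im / c.re, Complex.ext ?_ ?_⟩ <;>
    simp only [mul_re, mul_im, add_re, add_im, ofReal_re, ofReal_im, I_re, I_im] <;>
    field_simp <;> ring

theorem exists_ofReal_mul_add_I_mul_eq {c : ℂ} (hc : c.re ≠ 0) (z : ℂ) :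
    ∃ α β : ℝ, (α : ℂ) * c + I * β = z := by
  refine ⟨z.re / c.re, z.im - z.re / c.re * c.im, Complex.ext ?_ ?_⟩ <;>
    simp only [mul_re, mul_im, add_re, add_im, ofReal_re, ofReal_im, I_re, I_im] <;>
    field_simp <;> ring

theorem normSq_eq_abs_of_mul_pow_four_eq {A w : ℂ} {r : ℝ} (hA : A ≠ 0)
    (hw : A * w ^ 4 = -(‖A‖ : ℂ) * (r : ℂ) ^ 2) : normSq w = |r| := by
  have hnorm : ‖w‖ ^ 4 = r ^ 2 := by
    have h := congrArg norm hw
    simp only [norm_mul, norm_pow, norm_neg, norm_real, Real.norm_eq_abs, abs_norm,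
      sq_abs] at h
    exact mul_left_cancel₀ (norm_ne_zero_iff.mpr hA) h
  have hsq : normSq w ^ 2 = |r| ^ 2 := by
    rw [← Complex.sq_norm, ← pow_mul, sq_abs]
    exact hnorm
  exact (pow_left_inj₀ (normSq_nonneg w) (abs_nonneg r) two_ne_zero).mp hsq

theorem exists_mul_pow_four_eq_neg_norm_mul_sq {A : ℂ} (hA : A ≠ 0) (r : ℝ) :
    ∃ w : ℂ, A * w ^ 4 = -(‖A‖ : ℂ) * (r : ℂ) ^ 2 := by
  obtain ⟨w, hw⟩ := IsAlgClosed.exists_pow_nat_eq (-(‖A‖ : ℂ) * (r : ℂ) ^ 2 / A)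
    four_pos
  exact ⟨w, by rw [hw, mul_div_cancel₀ _ hA]⟩

end Complex

/-- **Canonical form of the orbits with `Re c ≠ 0`:** for `A ≠ 0` and `Re c ≠ 0`,
with `s = sign(Re c)`, there is an Ehlers group element `(α, β, γ, δ)`,
`αδ + βγ = 1`, `δ + iγc ≠ 0`, with `(αc + iβ)/(δ + iγc) = s` and
`A(δ + iγc)⁴ = −|A| (Re c)²`. -/
theorem ehlers_orbit_canonical_form_re_ne_zero (A c : ℂ) (hA : A ≠ 0)
    (hc : c.re ≠ 0) :
    ∃ α β γ δ : ℝ, α * δ + β * γ = 1 ∧ (δ : ℂ) + I * γ * c ≠ 0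
      ∧ (α * c + I * β) / ((δ : ℂ) + I * γ * c)
          = (if 0 < c.re then (1 : ℂ) else -1)
      ∧ A * ((δ : ℂ) + I * γ * c) ^ 4
          = -((‖A‖ : ℝ) : ℂ) * ((c.re : ℝ) : ℂ) ^ 2 := by
  set s : ℂ := if 0 < c.re then 1 else -1
  have hs : s * |c.re| = c.re := by
    rcases hc.lt_or_gt with h | h
    · simp [s, not_lt.mpr h.le, abs_of_neg h]
    · simp [s, h, abs_of_pos h]
  obtain ⟨w, hw⟩ := exists_mul_pow_four_eq_neg_norm_mul_sq hA c.re
  have hnormSq : normSq w = |c.re| := normSq_eq_abs_of_mul_pow_four_eq hA hw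
  have hw0 : w ≠ 0 := by
    rw [← normSq_pos, hnormSq]
    exact abs_pos.mpr hc
  obtain ⟨δ, γ, hden⟩ := exists_ofReal_add_I_mul_mul_eq hc w
  obtain ⟨α, β, hnum⟩ := exists_ofReal_mul_add_I_mul_eq hc (s * w)
  have hdet : c.re * (α * δ + β * γ) = c.re * 1 := by
    rw [← re_conj_mul_eq_re_mul, hden, hnum, mul_left_comm, ← normSq_eq_conj_mul_self,
      hnormSq, hs, mul_one, ofReal_re]
  refine ⟨α, β, γ, δ, mul_left_cancel₀ hc hdet, hden ▸ hw0, ?_, hden ▸ hw⟩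
  rw [hden, hnum, mul_div_cancel_right₀ _ hw0]
end

section
/- Let A, c ∈ ℂ with A ≠ 0 and Re(c) = 0. Then: (i) for every α, β, γ, δ ∈ ℝ with αδ + βγ = 1 and δ + iγc ≠ 0, the transformed value A' = A·(δ + iγc)⁴ satisfies A'/|A'| = A/|A| (the factor (δ + iγc)⁴ is a positive real number); (ii) there exist α, β, γ, δ ∈ ℝ with αδ + βγ = 1 and δ + iγc ≠ 0 such that (αc + iβ)/(δ + iγc) = 0 and A·(δ + iγc)⁴ = A/|A|. -/
/-!
When `Re c = 0`, the number `i c` is real, so every factor `δ + iγc` is real and its fourth power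
is a positive real, which does not change the phase `A / |A|`. Taking `γ = 0` and `δ = |A|^(-1/4)`
scales `A` to `A / |A|`, and the matching `α = |A|^(1/4)`, `β = -α Im c` sends `c` to
`α (c - i Im c) / δ = α Re c / δ = 0`.
-/

open Complex

namespace Complex

variable {c : ℂ}

theorem ofReal_add_I_mul_ofReal_mul_eq_ofReal (hc : c.re = 0) (γ δ : ℝ) :
    (δ : ℂ) + I * γ * c = ((δ - γ * c.im : ℝ) : ℂ) := by
  apply Complex.ext <;> simp [hc]; ring

theorem ofReal_mul_add_I_mul_ofReal_neg_mul_im (hc : c.re = 0) (s : ℝ) :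
    (s : ℂ) * c + I * ((-s * c.im : ℝ) : ℂ) = 0 := by
  apply Complex.ext <;> simp [hc]

theorem mul_ofReal_div_norm_mul_ofReal (z : ℂ) {t : ℝ} (ht : 0 < t) :
    z * t / ((‖z * t‖ : ℝ) : ℂ) = z / ((‖z‖ : ℝ) : ℂ) := by
  rw [norm_mul, norm_real, Real.norm_of_nonneg ht.le, ofReal_mul]
  exact mul_div_mul_right z _ (ofReal_ne_zero.mpr ht.ne')

end Complex

/-- **The orbits with `Re c = 0`:** for `A ≠ 0` and `Re c = 0`,
(i) every Ehlers group element `(α, β, γ, δ)` with `αδ + βγ = 1` and `δ + iγc ≠ 0`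
multiplies `A` by the positive real factor `(δ + iγc)⁴`, so `A' = A(δ + iγc)⁴`
satisfies `A'/|A'| = A/|A|`; (ii) there is such an element carrying `(c, A)` to
`(c', A') = (0, A/|A|)`. -/
theorem ehlers_orbit_re_eq_zero (A c : ℂ) (hA : A ≠ 0) (hc : c.re = 0) :
    (∀ α β γ δ : ℝ, α * δ + β * γ = 1 → (δ : ℂ) + I * γ * c ≠ 0 →
        (0 < (((δ : ℂ) + I * γ * c) ^ 4).re ∧ (((δ : ℂ) + I * γ * c) ^ 4).im = 0)
        ∧ A * ((δ : ℂ) + I * γ * c) ^ 4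
            / ((‖A * ((δ : ℂ) + I * γ * c) ^ 4‖ : ℝ) : ℂ)
          = A / ((‖A‖ : ℝ) : ℂ))
    ∧ ∃ α β γ δ : ℝ, α * δ + β * γ = 1 ∧ (δ : ℂ) + I * γ * c ≠ 0
        ∧ (α * c + I * β) / ((δ : ℂ) + I * γ * c) = 0
        ∧ A * ((δ : ℂ) + I * γ * c) ^ 4 = A / ((‖A‖ : ℝ) : ℂ) := by
  refine ⟨fun α β γ δ _ hne => ?_, ?_⟩
  · rw [ofReal_add_I_mul_ofReal_mul_eq_ofReal hc] at hne ⊢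
    set r : ℝ := δ - γ * c.im
    have hr4 : 0 < r ^ 4 := by
      have : r ≠ 0 := by exact_mod_cast hne
      positivity
    rw [← ofReal_pow, ofReal_re, ofReal_im]
    exact ⟨⟨hr4, rfl⟩, mul_ofReal_div_norm_mul_ofReal A hr4⟩
  · set s : ℝ := ‖A‖ ^ (4⁻¹ : ℝ)
    have hs : 0 < s := Real.rpow_pos_of_pos (norm_pos_iff.mpr hA) _
    have hs4 : s ^ 4 = ‖A‖ := by
      exact_mod_cast Real.rpow_inv_natCast_pow (n := 4) (norm_nonneg A) (by norm_num)
    refine ⟨s, -s * c.im, 0, s⁻¹, by rw [mul_zero, add_zero, mul_inv_cancel₀ hs.ne'], ?_⟩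
    rw [ofReal_add_I_mul_ofReal_mul_eq_ofReal hc, zero_mul, sub_zero]
    refine ⟨by exact_mod_cast (inv_pos.mpr hs).ne', ?_, ?_⟩
    · rw [ofReal_mul_add_I_mul_ofReal_neg_mul_im hc, zero_div]
    · rw [← ofReal_pow, inv_pow, hs4, ofReal_inv, div_eq_mul_inv]
end
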